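/- arXiv:2009.08315 — 3 statements merged into one kernel-verified Lean document; each statement's English description precedes it below -/
import Mathlib

section
/- Let m ≥ 2 be even and let d = n if m = 2 and d = 2n if m > 2. For every X ⊆ V(ℤ_m^n) there exists Y ⊆ V(ℤ_m^n) such that Y covers X and |Y| ≤ 4·|N(X)|/d. -/
/-!
Colour every vertex `v` of `ℤ_m^n` by the vector `s v = ∑ᵢ (vᵢ mod 2) • aᵢ` of a finite
`𝔽₂`-space `W`, where `a : Fin n → W` is onto. Since `m` is even, raising `vᵢ` by one adds `aᵢ`
to the colour, so every vertex has neighbours of every colour. Hence each colour class of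
`N(X)` covers `X`, and the smallest has at most `|N(X)| / |W|` elements. Taking
`|W| = 2 ^ ⌊log₂ n⌋ > n / 2 ≥ d / 4` gives the bound.
-/

open Finset Classical

noncomputable section

/-- The discrete torus `ℤ_m^n`: vertex set `{0,…,m-1}^n`, with `x ~ y` iff they differ by
`±1 (mod m)` in exactly one coordinate. -/
def torus (m n : ℕ) : SimpleGraph (Fin n → ZMod m) :=
  SimpleGraph.fromRel (fun x y => ∃ i, x i = y i + 1 ∧ ∀ j, j ≠ i → x j = y j)

/-- The neighbourhood `N(X)` of a set of vertices: all vertices with a neighbour in `X`. -/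
def nbhd {V : Type*} [Fintype V] (G : SimpleGraph V) (X : Finset V) : Finset V :=
  univ.filter fun v => ∃ x ∈ X, G.Adj x v

/-- `Y` covers `X`: every vertex of `X` has a neighbour in `Y` and every vertex of `Y`
has a neighbour in `X`. -/
def Covers {V : Type*} (G : SimpleGraph V) (Y X : Finset V) : Prop :=
  (∀ x ∈ X, ∃ y ∈ Y, G.Adj x y) ∧ ∀ y ∈ Y, ∃ x ∈ X, G.Adj y x

theorem Finset.exists_card_fiber_mul_le_card {α β : Type*} [Fintype β] [Nonempty β]
    (s : Finset α) (f : α → β) : ∃ y, #{x ∈ s | f x = y} * Fintype.card β ≤ #s := by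
  have hβ : 0 < Fintype.card β := Fintype.card_pos
  obtain ⟨y, -, hy⟩ := exists_card_fiber_lt_of_card_lt_mul (s := s) (t := univ) (f := f)
    (n := #s / Fintype.card β + 1) (by simpa using Nat.lt_mul_div_succ #s hβ)
  exact ⟨y, (Nat.le_div_iff_mul_le hβ).1 (Nat.lt_succ_iff.1 hy)⟩

theorem exists_covers_card_mul_le_of_forall_exists_adj {V C : Type*} [Fintype V] [Fintype C]
    [Nonempty C] (G : SimpleGraph V) (s : V → C) (X : Finset V)
    (hs : ∀ x ∈ X, ∀ c, ∃ y, G.Adj x y ∧ s y = c) :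
    ∃ Y, Covers G Y X ∧ #Y * Fintype.card C ≤ #(nbhd G X) := by
  obtain ⟨c, hc⟩ := (nbhd G X).exists_card_fiber_mul_le_card s
  refine ⟨{y ∈ nbhd G X | s y = c}, ⟨fun x hx => ?_, fun y hy => ?_⟩, hc⟩
  · obtain ⟨y, hxy, rfl⟩ := hs x hx c
    exact ⟨y, by simpa [nbhd] using ⟨x, hx, hxy⟩, hxy⟩
  · obtain ⟨x, hx, hxy⟩ := by simpa [nbhd] using (mem_filter.1 hy).1
    exact ⟨x, hx, hxy.symm⟩

section Torus

variable {m n : ℕ} {W : Type*} [AddCommGroup W] [Module (ZMod 2) W]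

theorem torus_adj_update_add_one [Nontrivial (ZMod m)] (v : Fin n → ZMod m) (i : Fin n) :
    (torus m n).Adj v (Function.update v i (v i + 1)) := by
  rw [torus, SimpleGraph.fromRel_adj]
  refine ⟨fun h => ?_, Or.inr ⟨i, by simp, fun j hj => Function.update_of_ne hj _ _⟩⟩
  simpa using congrFun h i

def parityChecksum (hm : 2 ∣ m) (a : Fin n → W) (v : Fin n → ZMod m) : W :=
  ∑ i, ZMod.castHom hm (ZMod 2) (v i) • a i

theorem parityChecksum_update_add_one (hm : 2 ∣ m) (a : Fin n → W) (v : Fin n → ZMod m)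
    (i : Fin n) :
    parityChecksum hm a (Function.update v i (v i + 1)) = parityChecksum hm a v + a i := by
  have hv : Function.update v i (v i + 1) = v + Pi.single i 1 := by
    ext j; rcases eq_or_ne j i with rfl | h <;> simp [*]
  simp only [parityChecksum, hv, Pi.add_apply, map_add, add_smul, sum_add_distrib]
  simp only [Pi.single_apply, apply_ite, map_one, map_zero, ite_smul, one_smul, zero_smul,
    sum_ite_eq', mem_univ, if_true]

theorem torus_exists_covers_card_mul_le [NeZero m] [Fintype W] (hm : Even m)
    (hW : Fintype.card W ≤ n) (X : Finset (Fin n → ZMod m)) :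
    ∃ Y, Covers (torus m n) Y X ∧ #Y * Fintype.card W ≤ #(nbhd (torus m n) X) := by
  have : Nontrivial (ZMod m) := ZMod.nontrivial_iff.2 (by rintro rfl; simp at hm)
  obtain ⟨e⟩ := Function.Embedding.nonempty_of_card_le (hW.trans (Fintype.card_fin n).ge)
  have ha : Function.Surjective (Function.invFun e) := Function.invFun_surjective e.injective
  refine exists_covers_card_mul_le_of_forall_exists_adj _
    (parityChecksum hm.two_dvd (Function.invFun e)) X fun x _ c => ?_
  obtain ⟨i, hi⟩ := ha (c - parityChecksum hm.two_dvd (Function.invFun e) x)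
  refine ⟨_, torus_adj_update_add_one x i, ?_⟩
  rw [parityChecksum_update_add_one, hi, add_sub_cancel]

end Torus

theorem torus_small_cover_general (m n : ℕ) [NeZero m] (hm : Even m) (hn : 1 ≤ n)
    (X : Finset (Fin n → ZMod m)) :
    ∃ Y : Finset (Fin n → ZMod m), Covers (torus m n) Y X ∧
      (Y.card : ℝ) ≤ 4 * ((nbhd (torus m n) X).card : ℝ) /
        ((if m = 2 then n else 2 * n : ℕ) : ℝ) := by
  set b := Nat.log 2 n
  set d : ℕ := if m = 2 then n else 2 * n
  obtain ⟨Y, hcover, hY⟩ := torus_exists_covers_card_mul_le hm (W := Fin b → ZMod 2)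
    (by simpa using Nat.pow_log_le_self 2 (x := n) (by omega)) X
  have hd : n ≤ d ∧ d ≤ 2 * n := by dsimp only [d]; split_ifs <;> omega
  have hn_lt : n < 2 * 2 ^ b := by
    simpa [pow_succ, mul_comm] using Nat.lt_pow_succ_log_self one_lt_two n
  refine ⟨Y, hcover, (le_div_iff₀ (by exact_mod_cast (by omega : 0 < d))).2 ?_⟩
  have hY : #Y * 2 ^ b ≤ #(nbhd (torus m n) X) := by simpa using hY
  exact_mod_cast calc #Y * d ≤ #Y * (4 * 2 ^ b) := Nat.mul_le_mul_left _ (by omega)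
    _ = 4 * (#Y * 2 ^ b) := by ring
    _ ≤ 4 * #(nbhd (torus m n) X) := Nat.mul_le_mul_left _ hY

/-- Every `X ⊆ V(ℤ_m^n)` has a cover `Y` with `|Y| ≤ 4|N(X)|/d`, where `d` is the degree
of the torus. -/
theorem torus_small_cover (m n : ℕ) [NeZero m] (hm : Even m) (hm2 : 2 ≤ m) (hn : 1 ≤ n)
    (X : Finset (Fin n → ZMod m)) :
    ∃ Y : Finset (Fin n → ZMod m), Covers (torus m n) Y X ∧
      (Y.card : ℝ) ≤ 4 * ((nbhd (torus m n) X).card : ℝ) /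
        ((if m = 2 then n else 2 * n : ℕ) : ℝ) :=
  torus_small_cover_general m n hm hn X
end
end

section
/- Let m ≥ 2 be even, let ℓ = 2^k be a power of 2, and suppose ℓ divides n. Let d = n if m = 2 and d = 2n if m > 2 (so ℓ divides d). Then there exists a partition V(ℤ_m^n) = V₁ ∪ … ∪ V_ℓ such that for every i ∈ [ℓ] and every vertex v of ℤ_m^n, the number of neighbours of v lying in V_i equals exactly d/ℓ. -/
/-!
Label each coordinate direction `j` by some `w j ∈ (ℤ/2)^k` so that every label is used by exactly
`n / 2^k` directions, and colour a vertex `x` by `∑ j, (x j mod 2) • w j`; this is well defined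
because `m` is even. A step `±1` along direction `j` changes the colour of a vertex by exactly
`w j`, so the neighbours of `v` of colour `a` are the neighbours along the `n / 2^k` directions
labelled `a - colour v`, each contributing one neighbour if `m = 2` and two otherwise.
-/

open Finset Classical

noncomputable section

theorem injOn_add_single {ι G : Type*} [DecidableEq ι] [AddGroup G] (v : ι → G) :
    Set.InjOn (fun p : ι × G => v + Pi.single p.1 p.2) {p | p.2 ≠ 0} := by
  rintro ⟨j₁, δ₁⟩ (h₁ : δ₁ ≠ 0) ⟨j₂, δ₂⟩ - h
  have hsingle : Pi.single j₁ δ₁ = Pi.single j₂ δ₂ := add_left_cancel (a := v) h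
  obtain rfl : j₁ = j₂ := by
    by_contra hne
    exact h₁ (by simpa [Pi.single_apply, hne] using congrFun hsingle j₁)
  rw [Pi.single_injective j₁ hsingle]

section Torus

variable {m n : ℕ}

theorem torus_adj_iff [Nontrivial (ZMod m)] {u v : Fin n → ZMod m} :
    (torus m n).Adj v u ↔ ∃ j, ∃ δ ∈ ({1, -1} : Finset (ZMod m)), u = v + Pi.single j δ := by
  have step : ∀ x y : Fin n → ZMod m,
      (∃ i, x i = y i + 1 ∧ ∀ j, j ≠ i → x j = y j) ↔ ∃ i, x = y + Pi.single i 1 := by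
    refine fun x y => exists_congr fun i => ⟨fun ⟨hi, hj⟩ => ?_, fun h => ?_⟩
    · funext j
      rw [Pi.add_apply, Pi.single_apply]
      split_ifs with hji
      · exact hji ▸ hi
      · simpa using hj j hji
    · subst h; exact ⟨by simp, fun j hj => by simp [hj]⟩
  simp only [torus, SimpleGraph.fromRel_adj, step, Finset.mem_insert, Finset.mem_singleton]
  constructor
  · rintro ⟨-, ⟨j, rfl⟩ | ⟨j, rfl⟩⟩
    · exact ⟨j, -1, Or.inr rfl, by rw [add_assoc, ← Pi.single_add]; simp⟩
    · exact ⟨j, 1, Or.inl rfl, rfl⟩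
  · rintro ⟨j, δ, rfl | rfl, rfl⟩
    · refine ⟨fun h => ?_, Or.inr ⟨j, rfl⟩⟩
      simpa using congrFun h j
    · refine ⟨fun h => ?_, Or.inl ⟨j, by rw [add_assoc, ← Pi.single_add]; simp⟩⟩
      simpa using congrFun h j

theorem card_filter_torus_adj [NeZero m] [Nontrivial (ZMod m)] (v : Fin n → ZMod m)
    (Q : (Fin n → ZMod m) → Prop) [DecidablePred Q] :
    #{u | (torus m n).Adj v u ∧ Q u} =
      #{p ∈ univ ×ˢ ({1, -1} : Finset (ZMod m)) | Q (v + Pi.single p.1 p.2)} := by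
  have hinj : Set.InjOn (fun p : Fin n × ZMod m => v + Pi.single p.1 p.2)
      ↑({p ∈ (univ : Finset (Fin n)) ×ˢ ({1, -1} : Finset (ZMod m)) |
        Q (v + Pi.single p.1 p.2)}) := by
    refine (injOn_add_single v).mono fun p hp => ?_
    have : p.2 = 1 ∨ p.2 = -1 := by simpa using (mem_filter.1 hp).1
    rcases this with h | h <;> simp [h]
  rw [← card_image_of_injOn hinj]
  congr 1
  ext u
  simp only [mem_filter, mem_univ, true_and, mem_image, mem_product, torus_adj_iff]
  constructor
  · rintro ⟨⟨j, δ, hδ, rfl⟩, hQ⟩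
    exact ⟨(j, δ), ⟨hδ, hQ⟩, rfl⟩
  · rintro ⟨⟨j, δ⟩, ⟨hδ, hQ⟩, rfl⟩
    exact ⟨⟨j, δ, hδ, rfl⟩, hQ⟩

theorem ZMod.card_one_neg_one (hm : 2 ≤ m) :
    #({1, -1} : Finset (ZMod m)) = if m = 2 then 1 else 2 := by
  split_ifs with h2
  · subst h2; decide
  · have : Fact (2 < m) := ⟨by omega⟩
    exact card_pair ZMod.neg_one_ne_one.symm

end Torus

theorem Fintype.exists_card_fiber_eq_card_div {α β : Type*} [Fintype α] [Fintype β]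
    [DecidableEq β] (h : Fintype.card β ∣ Fintype.card α) :
    ∃ f : α → β, ∀ b, #{a | f a = b} = Fintype.card α / Fintype.card β := by
  set t := Fintype.card α / Fintype.card β
  let e : α ≃ β × Fin t := Fintype.equivOfCardEq (by simp [t, Nat.mul_div_cancel' h])
  refine ⟨fun a => (e a).1, fun b => ?_⟩
  calc #{a | (e a).1 = b} = #({b} ×ˢ (univ : Finset (Fin t))) :=
        Finset.card_equiv e fun a => by simp [Prod.ext_iff, eq_comm]
    _ = t := by simp

section ParityColour

variable {m n : ℕ} {A : Type*} [AddCommGroup A] [Module (ZMod 2) A]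

def parityColour (hm : 2 ∣ m) (w : Fin n → A) (x : Fin n → ZMod m) : A :=
  ∑ j, ZMod.castHom hm (ZMod 2) (x j) • w j

theorem parityColour_add_single (hm : 2 ∣ m) (w : Fin n → A) (v : Fin n → ZMod m) (j : Fin n)
    (δ : ZMod m) :
    parityColour hm w (v + Pi.single j δ) =
      parityColour hm w v + ZMod.castHom hm (ZMod 2) δ • w j := by
  simp only [parityColour, Pi.add_apply, map_add, add_smul, sum_add_distrib]
  congr 1
  rw [Fintype.sum_eq_single j fun i hi => by simp [hi]]
  simp

theorem card_filter_torus_adj_parityColour_eq [DecidableEq A] [NeZero m] [Nontrivial (ZMod m)]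
    (hm : 2 ∣ m) (w : Fin n → A) (v : Fin n → ZMod m) (a : A) :
    #{u | (torus m n).Adj v u ∧ parityColour hm w u = a} =
      #{j | w j = a - parityColour hm w v} * #({1, -1} : Finset (ZMod m)) := by
  rw [card_filter_torus_adj, ← card_product, ← filter_product_left]
  refine congrArg card (filter_congr fun p hp => ?_)
  have hδ : ZMod.castHom hm (ZMod 2) p.2 = 1 := by
    rcases mem_insert.1 (mem_product.1 hp).2 with h | h
    · rw [h, map_one]
    · rw [mem_singleton.1 h, map_neg, map_one]; decide
  rw [parityColour_add_single, hδ, one_smul, eq_sub_iff_add_eq']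

end ParityColour

theorem torus_equitable_partition_general (m n k : ℕ) [NeZero m] (hm : Even m)
    (hdvd : 2 ^ k ∣ n) :
    ∃ c : (Fin n → ZMod m) → Fin (2 ^ k),
      ∀ (i : Fin (2 ^ k)) (v : Fin n → ZMod m),
        (univ.filter fun u => (torus m n).Adj v u ∧ c u = i).card =
          (if m = 2 then n else 2 * n) / 2 ^ k := by
  have hm2 : 2 ≤ m := by
    obtain ⟨r, rfl⟩ := hm
    have := NeZero.ne (r + r)
    omega
  have : Fact (1 < m) := ⟨hm2⟩
  have hcard : Fintype.card (Fin k → ZMod 2) = 2 ^ k := by simp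
  obtain ⟨w, hw⟩ := Fintype.exists_card_fiber_eq_card_div (α := Fin n)
    (β := Fin k → ZMod 2) (by simpa [hcard] using hdvd)
  let e := Fintype.equivFinOfCardEq hcard
  refine ⟨fun x => e (parityColour hm.two_dvd w x), fun i v => ?_⟩
  simp only [← e.eq_symm_apply, card_filter_torus_adj_parityColour_eq]
  rw [hw, ZMod.card_one_neg_one hm2, hcard, Fintype.card_fin]
  split_ifs
  · simp
  · rw [mul_comm, Nat.mul_div_assoc _ hdvd]

/-- If `ℓ = 2^k` divides `n`, then the vertices of `ℤ_m^n` can be partitioned into classes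
`V₁, …, V_ℓ` (encoded as the fibres of a map `c : V → Fin ℓ`) such that every vertex has
exactly `d/ℓ` neighbours in each class, `d` being the degree of the torus. -/
theorem torus_equitable_partition (m n k : ℕ) [NeZero m] (hm : Even m) (hm2 : 2 ≤ m)
    (hdvd : 2 ^ k ∣ n) :
    ∃ c : (Fin n → ZMod m) → Fin (2 ^ k),
      ∀ (i : Fin (2 ^ k)) (v : Fin n → ZMod m),
        (univ.filter fun u => (torus m n).Adj v u ∧ c u = i).card =
          (if m = 2 then n else 2 * n) / 2 ^ k :=
  torus_equitable_partition_general m n k hm hdvd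
end
end

section
/- For every n ≥ 1 and k ≥ 1, the map φ sending a k-bounded function f ∈ 𝓑_k(n) to the function v ↦ 2f(v) − k|v| on V(Q_n) is a bijection from 𝓑_k(n) onto Lip(Q_n; 𝒮_k), where 𝒮_k = {0,…,k} ∩ (k + 2ℤ) is the set of integers in {0,…,k} of the same parity as k. -/
/-! The correspondence `v ↦ vset n v` identifies `Q_n` with the Boolean lattice `2^{[n]}`,
whose edges are the pairs `A`, `insert x A` with `x ∉ A`. On that lattice, a difference
`d = 2(f(insert x A) - f A) - k` lies in `𝒮_k` exactly when `0 ≤ f(insert x A) - f A ≤ k`,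
so `f ↦ 2f - k|·|` matches the two edge conditions; conversely, `g + k|·|` increases by an
even amount along every edge from `∅`, so it is twice a natural-valued function. -/

open Finset Classical

noncomputable section

def cube (n : ℕ) : SimpleGraph (Fin n → ZMod 2) := torus 2 n

def vset (n : ℕ) (v : Fin n → ZMod 2) : Finset (Fin n) :=
  univ.filter fun i => v i = 1

def IsKBounded (n k : ℕ) (f : Finset (Fin n) → ℕ) : Prop :=
  f ∅ = 0 ∧ ∀ (A : Finset (Fin n)) (x : Fin n), x ∉ A →
    f A ≤ f (insert x A) ∧ f (insert x A) ≤ f A + k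

def IsLipSk (n k : ℕ) (g : (Fin n → ZMod 2) → ℤ) : Prop :=
  g 0 = 0 ∧ ∀ u v, (cube n).Adj u v →
    (g u - g v).natAbs ≤ k ∧ (g u - g v).natAbs % 2 = k % 2

def InSk (k : ℕ) (d : ℤ) : Prop :=
  d.natAbs ≤ k ∧ d.natAbs % 2 = k % 2

theorem inSk_neg {k : ℕ} {d : ℤ} : InSk k (-d) ↔ InSk k d := by
  simp only [InSk, Int.natAbs_neg]

theorem inSk_two_mul_sub_iff {k : ℕ} {a : ℤ} : InSk k (2 * a - k) ↔ 0 ≤ a ∧ a ≤ k := by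
  unfold InSk
  omega

theorem InSk.exists_eq_two_mul_sub {k : ℕ} {d : ℤ} (h : InSk k d) :
    ∃ a : ℤ, 0 ≤ a ∧ a ≤ k ∧ d = 2 * a - k := by
  unfold InSk at h
  exact ⟨(d + k) / 2, by omega, by omega, by omega⟩

def IsLipSkFinset (n k : ℕ) (G : Finset (Fin n) → ℤ) : Prop :=
  G ∅ = 0 ∧ ∀ (A : Finset (Fin n)) (x : Fin n), x ∉ A → InSk k (G (insert x A) - G A)

theorem exists_nat_eq_two_mul_of_steps {α : Type*} [DecidableEq α] {H : Finset α → ℤ}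
    (h0 : H ∅ = 0) (hstep : ∀ (A : Finset α) (x : α), x ∉ A →
      ∃ a : ℤ, 0 ≤ a ∧ H (insert x A) = H A + 2 * a)
    (A : Finset α) : ∃ m : ℕ, H A = 2 * m := by
  induction A using Finset.induction_on with
  | empty => exact ⟨0, by simp [h0]⟩
  | insert x A hx ih =>
    obtain ⟨m, hm⟩ := ih
    obtain ⟨a, ha, hH⟩ := hstep A x hx
    exact ⟨m + a.toNat, by rw [hH, hm]; push_cast; omega⟩

section toLip

variable {n k : ℕ}

def toLip (k : ℕ) (f : Finset (Fin n) → ℕ) (A : Finset (Fin n)) : ℤ :=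
  2 * f A - k * A.card

theorem toLip_insert_sub {f : Finset (Fin n) → ℕ} {A : Finset (Fin n)} {x : Fin n}
    (hx : x ∉ A) :
    toLip k f (insert x A) - toLip k f A = 2 * ((f (insert x A) : ℤ) - f A) - k := by
  simp only [toLip, card_insert_of_notMem hx]
  push_cast
  ring

theorem toLip_mapsTo :
    Set.MapsTo (toLip k) {f | IsKBounded n k f} {G | IsLipSkFinset n k G} := by
  rintro f ⟨hf0, hstep⟩
  refine ⟨by simp [toLip, hf0], fun A x hx => ?_⟩
  rw [toLip_insert_sub hx, inSk_two_mul_sub_iff]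
  have := hstep A x hx
  omega

theorem toLip_injective : Function.Injective (toLip (n := n) k) := by
  intro f f' h
  funext A
  have := congrFun h A
  simp only [toLip] at this
  omega

theorem toLip_surjOn :
    Set.SurjOn (toLip k) {f | IsKBounded n k f} {G | IsLipSkFinset n k G} := by
  rintro G ⟨hG0, hGstep⟩
  have hstep : ∀ (A : Finset (Fin n)) (x : Fin n), x ∉ A → ∃ a : ℤ, 0 ≤ a ∧ a ≤ k ∧
      G (insert x A) + k * (insert x A).card = G A + k * A.card + 2 * a := by
    intro A x hx
    obtain ⟨a, ha0, hak, hd⟩ := (hGstep A x hx).exists_eq_two_mul_sub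
    refine ⟨a, ha0, hak, ?_⟩
    rw [card_insert_of_notMem hx]
    push_cast
    linarith
  choose F hF using exists_nat_eq_two_mul_of_steps (H := fun A => G A + k * A.card)
    (by simp [hG0]) fun A x hx => (hstep A x hx).imp fun a ha => ⟨ha.1, ha.2.2⟩
  refine ⟨F, ⟨?_, fun A x hx => ?_⟩, ?_⟩
  · have := hF ∅
    simp only [hG0, card_empty] at this
    omega
  · obtain ⟨a, ha0, hak, hH⟩ := hstep A x hx
    have := hF A
    have := hF (insert x A)
    omega
  · funext A
    have := hF A
    simp only [toLip]
    omega

theorem toLip_bijOn :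
    Set.BijOn (toLip k) {f | IsKBounded n k f} {G | IsLipSkFinset n k G} :=
  ⟨toLip_mapsTo, toLip_injective.injOn, toLip_surjOn⟩

end toLip

section cube

variable {n : ℕ}

theorem zmodTwo_eq_add_one_iff_ne : ∀ a b : ZMod 2, a = b + 1 ↔ a ≠ b := by decide

theorem zmodTwo_eq_zero_of_ne_one : ∀ a : ZMod 2, a ≠ 1 → a = 0 := by decide

theorem cube_adj_iff {u v : Fin n → ZMod 2} :
    (cube n).Adj u v ↔ ∃ i, u i ≠ v i ∧ ∀ j, j ≠ i → u j = v j := by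
  simp only [cube, torus, SimpleGraph.fromRel_adj, zmodTwo_eq_add_one_iff_ne]
  constructor
  · rintro ⟨_, ⟨i, hi, h⟩ | ⟨i, hi, h⟩⟩
    · exact ⟨i, hi, h⟩
    · exact ⟨i, Ne.symm hi, fun j hj => (h j hj).symm⟩
  · rintro ⟨i, hi, h⟩
    exact ⟨fun huv => hi (congrFun huv i), Or.inl ⟨i, hi, h⟩⟩

def vsetEquiv (n : ℕ) : (Fin n → ZMod 2) ≃ Finset (Fin n) where
  toFun := vset n
  invFun A i := if i ∈ A then 1 else 0
  left_inv v := by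
    funext i
    by_cases h : v i = 1
    · simp [vset, h]
    · simp [vset, zmodTwo_eq_zero_of_ne_one _ h]
  right_inv A := by
    ext i
    by_cases h : i ∈ A <;> simp [vset, h]

theorem vset_vsetEquiv_symm (A : Finset (Fin n)) : vset n ((vsetEquiv n).symm A) = A :=
  (vsetEquiv n).apply_symm_apply A

theorem vset_zero : vset n 0 = ∅ := by
  ext i
  simp [vset]

theorem vset_eq_insert_of_agree_off {u v : Fin n → ZMod 2} {i : Fin n} (hu : u i = 1)
    (hv : v i ≠ 1) (h : ∀ j, j ≠ i → u j = v j) : vset n u = insert i (vset n v) := by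
  ext j
  by_cases hj : j = i
  · subst hj
    simp [vset, hu]
  · simp [vset, hj, h j hj]

theorem vset_eq_insert_of_cube_adj {u v : Fin n → ZMod 2} (huv : (cube n).Adj u v) :
    (∃ x ∉ vset n v, vset n u = insert x (vset n v)) ∨
      (∃ x ∉ vset n u, vset n v = insert x (vset n u)) := by
  obtain ⟨i, hi, h⟩ := cube_adj_iff.mp huv
  by_cases hv : v i = 1
  · have hu : u i ≠ 1 := hv ▸ hi
    exact Or.inr ⟨i, by simp [vset, hu],
      vset_eq_insert_of_agree_off hv hu fun j hj => (h j hj).symm⟩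
  · have hu : u i = 1 := by
      by_contra hu
      exact hi ((zmodTwo_eq_zero_of_ne_one _ hu).trans (zmodTwo_eq_zero_of_ne_one _ hv).symm)
    exact Or.inl ⟨i, by simp [vset, hv], vset_eq_insert_of_agree_off hu hv h⟩

theorem cube_adj_vsetEquiv_symm_insert {A : Finset (Fin n)} {x : Fin n} (hx : x ∉ A) :
    (cube n).Adj ((vsetEquiv n).symm (insert x A)) ((vsetEquiv n).symm A) :=
  cube_adj_iff.mpr ⟨x, by simp [vsetEquiv, hx], fun j hj => by simp [vsetEquiv, hj]⟩

theorem isLipSk_comp_vset_iff {k : ℕ} {G : Finset (Fin n) → ℤ} :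
    IsLipSk n k (G ∘ vset n) ↔ IsLipSkFinset n k G := by
  simp only [IsLipSk, IsLipSkFinset, Function.comp_apply, vset_zero]
  refine and_congr_right fun _ => ⟨fun h A x hx => ?_, fun h u v huv => ?_⟩
  · have := h _ _ (cube_adj_vsetEquiv_symm_insert hx)
    rwa [vset_vsetEquiv_symm, vset_vsetEquiv_symm] at this
  · rcases vset_eq_insert_of_cube_adj huv with ⟨x, hx, hu⟩ | ⟨x, hx, hv⟩
    · exact hu ▸ h _ x hx
    · rw [← neg_sub, hv]
      exact inSk_neg.mpr (h _ x hx)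

end cube

theorem kBounded_equiv_lip_general (n k : ℕ) :
    Set.BijOn
      (fun (f : Finset (Fin n) → ℕ) (v : Fin n → ZMod 2) =>
        2 * (f (vset n v) : ℤ) - (k : ℤ) * ((vset n v).card : ℤ))
      {f | IsKBounded n k f} {g | IsLipSk n k g} :=
  -- `(vsetEquiv n).symm.arrowCongr (Equiv.refl ℤ)` is precomposition `G ↦ G ∘ vset n`.
  (((vsetEquiv n).symm.arrowCongr (Equiv.refl ℤ)).bijOn fun _ => isLipSk_comp_vset_iff).comp
    toLip_bijOn

/-- The map `f ↦ (v ↦ 2f(v) - k|v|)` is a bijection from the `k`-bounded functions on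
`2^{[n]}` onto `Lip(Q_n; 𝒮_k)`. -/
theorem kBounded_equiv_lip (n k : ℕ) (hn : 1 ≤ n) (hk : 1 ≤ k) :
    Set.BijOn
      (fun (f : Finset (Fin n) → ℕ) (v : Fin n → ZMod 2) =>
        2 * (f (vset n v) : ℤ) - (k : ℤ) * ((vset n v).card : ℤ))
      {f | IsKBounded n k f} {g | IsLipSk n k g} :=
  kBounded_equiv_lip_general n k
end
end
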